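/- Let m, n be positive integers, let C and C' be n×n complex matrices, and let B and B' be m×n complex matrices such that B*B + C*C = I_n and B'*B' + C'*C' = I_n. Then the (m+n)×(m+n) block matrices A = [[0, B],[0, C]] and A' = [[0, B'],[0, C']] are unitarily similar if and only if C and C' are unitarily similar. -/
import Mathlib

open Matrix

/-- Two square complex matrices are unitarily similar if one is obtained from the
other by conjugation by a unitary matrix. -/
def Matrix.UnitarilySimilar {ι : Type*} [Fintype ι] [DecidableEq ι]
    (X Y : Matrix ι ι ℂ) : Prop :=
  ∃ U ∈ Matrix.unitaryGroup ι ℂ, Y = Uᴴ * X * U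

open scoped InnerProductSpace in
/-- If `XᴴX = YᴴY` then `Y = V X` for some unitary `V`. -/
lemma exists_unitary_mul_eq {m n : ℕ} (X Y : Matrix (Fin m) (Fin n) ℂ)
    (h : Xᴴ * X = Yᴴ * Y) :
    ∃ V ∈ Matrix.unitaryGroup (Fin m) ℂ, Y = V * X := by
  set fX : EuclideanSpace ℂ (Fin n) →ₗ[ℂ] EuclideanSpace ℂ (Fin m) := Matrix.toEuclideanLin X with hfX
  set fY : EuclideanSpace ℂ (Fin n) →ₗ[ℂ] EuclideanSpace ℂ (Fin m) := Matrix.toEuclideanLin Y with hfY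
  have hmul : ∀ {a b c : ℕ} (M : Matrix (Fin a) (Fin b) ℂ) (N : Matrix (Fin b) (Fin c) ℂ)
      (v : EuclideanSpace ℂ (Fin c)),
      Matrix.toEuclideanLin (M * N) v = Matrix.toEuclideanLin M (Matrix.toEuclideanLin N v) := by
    intro a b c M N v
    simp [Matrix.toEuclideanLin_apply, Matrix.mulVec_mulVec]
  have hinner : ∀ w, (⟪fX w, fX w⟫_ℂ) = ⟪fY w, fY w⟫_ℂ := by
    intro w
    have h1 : ⟪fX w, fX w⟫_ℂ = ⟪w, Matrix.toEuclideanLin (Xᴴ * X) w⟫_ℂ := by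
      rw [hmul, Matrix.toEuclideanLin_conjTranspose_eq_adjoint, LinearMap.adjoint_inner_right]
    have h2 : ⟪fY w, fY w⟫_ℂ = ⟪w, Matrix.toEuclideanLin (Yᴴ * Y) w⟫_ℂ := by
      rw [hmul, Matrix.toEuclideanLin_conjTranspose_eq_adjoint, LinearMap.adjoint_inner_right]
    rw [h1, h2, h]
  have hnorm : ∀ w, ‖fY w‖ = ‖fX w‖ := by
    intro w
    have := hinner w
    rw [inner_self_eq_norm_sq_to_K, inner_self_eq_norm_sq_to_K] at this
    have h2 : (‖fX w‖ : ℝ) ^ 2 = (‖fY w‖ : ℝ) ^ 2 := by exact_mod_cast this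
    nlinarith [norm_nonneg (fX w), norm_nonneg (fY w)]
  have hker : LinearMap.ker fX ≤ LinearMap.ker fY := by
    intro w hw
    rw [LinearMap.mem_ker] at hw ⊢
    have := hnorm w
    rw [hw, norm_zero] at this
    exact norm_eq_zero.mp this
  set L0 : (LinearMap.range fX) →ₗ[ℂ] EuclideanSpace ℂ (Fin m) :=
    ((LinearMap.ker fX).liftQ fY hker).comp
      (fX.quotKerEquivRange.symm : (LinearMap.range fX) →ₗ[ℂ] _) with hL0def
  have hL0 : ∀ (w : EuclideanSpace ℂ (Fin n)),
      L0 ⟨fX w, LinearMap.mem_range_self _ w⟩ = fY w := by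
    intro w
    simp only [hL0def, LinearMap.comp_apply, LinearEquiv.coe_coe,
      LinearMap.quotKerEquivRange_symm_apply_image, Submodule.mkQ_apply, Submodule.liftQ_apply]
  have hL0norm : ∀ s : LinearMap.range fX, ‖L0 s‖ = ‖s‖ := by
    rintro ⟨-, w, rfl⟩
    rw [hL0 w]
    exact hnorm w
  set L : (LinearMap.range fX) →ₗᵢ[ℂ] EuclideanSpace ℂ (Fin m) := ⟨L0, hL0norm⟩ with hLdef
  set g := L.extend
  set V : Matrix (Fin m) (Fin m) ℂ := Matrix.toEuclideanLin.symm g.toLinearMap with hVdef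
  have hVg : Matrix.toEuclideanLin V = g.toLinearMap := by
    rw [hVdef, LinearEquiv.apply_symm_apply]
  have hVX : ∀ w, Matrix.toEuclideanLin V (fX w) = fY w := by
    intro w
    rw [hVg]
    have : g.toLinearMap (fX w) = g ((⟨fX w, LinearMap.mem_range_self _ w⟩ :
        LinearMap.range fX) : EuclideanSpace ℂ (Fin m)) := rfl
    rw [this, LinearIsometry.extend_apply]
    exact hL0 w
  refine ⟨V, ?_, ?_⟩
  · rw [Matrix.mem_unitaryGroup_iff', Matrix.star_eq_conjTranspose]
    apply Matrix.toEuclideanLin.injective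
    apply LinearMap.ext
    intro w
    rw [hmul]
    have h1 : Matrix.toEuclideanLin (1 : Matrix (Fin m) (Fin m) ℂ) w = w := by
      simp [Matrix.toEuclideanLin_apply]
    rw [h1, Matrix.toEuclideanLin_conjTranspose_eq_adjoint]
    apply ext_inner_left ℂ
    intro u
    rw [LinearMap.adjoint_inner_right, hVg]
    exact g.inner_map_map u w
  · apply Matrix.toEuclideanLin.injective
    apply LinearMap.ext
    intro w
    rw [hmul]
    exact (hVX w).symm

theorem stmt1 (m n : ℕ) (hm : 0 < m) (hn : 0 < n)
    (C C' : Matrix (Fin n) (Fin n) ℂ) (B B' : Matrix (Fin m) (Fin n) ℂ)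
    (hBC : Bᴴ * B + Cᴴ * C = 1) (hBC' : B'ᴴ * B' + C'ᴴ * C' = 1) :
    (Matrix.fromBlocks (0 : Matrix (Fin m) (Fin m) ℂ) B 0 C).UnitarilySimilar
        (Matrix.fromBlocks (0 : Matrix (Fin m) (Fin m) ℂ) B' 0 C') ↔
      C.UnitarilySimilar C' := by
  constructor
  · rintro ⟨U, hU, hA⟩
    have hU1 : Uᴴ * U = 1 := by
      have := hU.1; rwa [Matrix.star_eq_conjTranspose] at this
    have hU2 : U * Uᴴ = 1 := by
      have := hU.2; rwa [Matrix.star_eq_conjTranspose] at this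
    set A := Matrix.fromBlocks (0 : Matrix (Fin m) (Fin m) ℂ) B 0 C with hAdef
    set A' := Matrix.fromBlocks (0 : Matrix (Fin m) (Fin m) ℂ) B' 0 C' with hA'def
    set P := Matrix.fromBlocks (0 : Matrix (Fin m) (Fin m) ℂ) 0 0 (1 : Matrix (Fin n) (Fin n) ℂ)
      with hPdef
    have hAA : Aᴴ * A = P := by
      rw [hAdef, hPdef, Matrix.fromBlocks_conjTranspose, Matrix.fromBlocks_multiply]
      simp [hBC]
    have hAA' : A'ᴴ * A' = P := by
      rw [hA'def, hPdef, Matrix.fromBlocks_conjTranspose, Matrix.fromBlocks_multiply]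
      simp [hBC']
    have hPU : P = Uᴴ * P * U := by
      calc P = A'ᴴ * A' := hAA'.symm
        _ = (Uᴴ * A * U)ᴴ * (Uᴴ * A * U) := by rw [← hA]
        _ = Uᴴ * (Aᴴ * A) * U := by
            simp only [Matrix.conjTranspose_mul, Matrix.conjTranspose_conjTranspose,
              Matrix.mul_assoc]
            rw [← Matrix.mul_assoc U Uᴴ (A * U), hU2, Matrix.one_mul]
        _ = Uᴴ * P * U := by rw [hAA]
    have hcomm : U * P = P * U := by
      calc U * P = U * (Uᴴ * P * U) := by rw [← hPU]
        _ = P * U := by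
            simp only [Matrix.mul_assoc]
            rw [← Matrix.mul_assoc U Uᴴ (P * U), hU2, Matrix.one_mul]
    set a := U.toBlocks₁₁; set b := U.toBlocks₁₂; set c := U.toBlocks₂₁; set d := U.toBlocks₂₂
    have hUb : U = Matrix.fromBlocks a b c d := (Matrix.fromBlocks_toBlocks U).symm
    have hcomm' : Matrix.fromBlocks 0 b 0 d = Matrix.fromBlocks 0 0 c d := by
      have h := hcomm
      rw [hUb, hPdef, Matrix.fromBlocks_multiply, Matrix.fromBlocks_multiply] at h
      simpa using h
    have hb : b = 0 := by
      have := congrArg Matrix.toBlocks₁₂ hcomm'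
      simpa using this
    have hc : c = 0 := by
      have := congrArg Matrix.toBlocks₂₁ hcomm'
      simpa using this.symm
    have hUbd : U = Matrix.fromBlocks a 0 0 d := by rw [hUb, hb, hc]
    have hone : Matrix.toBlocks₂₂ (1 : Matrix (Fin m ⊕ Fin n) (Fin m ⊕ Fin n) ℂ) = 1 := by
      rw [← Matrix.fromBlocks_one]; exact Matrix.toBlocks_fromBlocks₂₂ _ _ _ _
    refine ⟨d, ?_, ?_⟩
    · constructor
      · rw [Matrix.star_eq_conjTranspose]
        have h := hU1
        rw [hUbd, Matrix.fromBlocks_conjTranspose, Matrix.fromBlocks_multiply] at h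
        have := congrArg Matrix.toBlocks₂₂ h
        simpa [hone] using this
      · rw [Matrix.star_eq_conjTranspose]
        have h := hU2
        rw [hUbd, Matrix.fromBlocks_conjTranspose, Matrix.fromBlocks_multiply] at h
        have := congrArg Matrix.toBlocks₂₂ h
        simpa [hone] using this
    · have h := hA
      rw [hAdef, hA'def, hUbd, Matrix.fromBlocks_conjTranspose, Matrix.fromBlocks_multiply,
        Matrix.fromBlocks_multiply] at h
      have := congrArg Matrix.toBlocks₂₂ h
      simpa using this
  · rintro ⟨Q, hQ, hC'⟩
    have hQ1 : Qᴴ * Q = 1 := by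
      have := hQ.1; rwa [Matrix.star_eq_conjTranspose] at this
    have hQ2 : Q * Qᴴ = 1 := by
      have := hQ.2; rwa [Matrix.star_eq_conjTranspose] at this
    have h1 : Bᴴ * B = 1 - Cᴴ * C := by rw [← hBC]; abel
    have h2 : B'ᴴ * B' = 1 - C'ᴴ * C' := by rw [← hBC']; abel
    have e1 : C'ᴴ * C' = Qᴴ * (Cᴴ * C) * Q := by
      rw [hC']
      simp only [Matrix.conjTranspose_mul, Matrix.conjTranspose_conjTranspose, Matrix.mul_assoc]
      rw [← Matrix.mul_assoc Q Qᴴ (C * Q), hQ2, Matrix.one_mul]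
    have e2 : (B * Q)ᴴ * (B * Q) = Qᴴ * (Bᴴ * B) * Q := by
      simp only [Matrix.conjTranspose_mul, Matrix.mul_assoc]
    have hXX : (B * Q)ᴴ * (B * Q) = B'ᴴ * B' := by
      rw [e2, h1, h2, e1, mul_sub, sub_mul, mul_one, hQ1]
    obtain ⟨V, hV, hB'⟩ := exists_unitary_mul_eq (B * Q) B' hXX
    have hV1 : Vᴴ * V = 1 := by
      have := hV.1; rwa [Matrix.star_eq_conjTranspose] at this
    have hV2 : V * Vᴴ = 1 := by
      have := hV.2; rwa [Matrix.star_eq_conjTranspose] at this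
    refine ⟨Matrix.fromBlocks Vᴴ 0 0 Q, ?_, ?_⟩
    · constructor
      · rw [Matrix.star_eq_conjTranspose, Matrix.fromBlocks_conjTranspose,
          Matrix.fromBlocks_multiply, ← Matrix.fromBlocks_one]
        simp [hV2, hQ1]
      · rw [Matrix.star_eq_conjTranspose, Matrix.fromBlocks_conjTranspose,
          Matrix.fromBlocks_multiply, ← Matrix.fromBlocks_one]
        simp [hV1, hQ2]
    · rw [Matrix.fromBlocks_conjTranspose, Matrix.fromBlocks_multiply,
        Matrix.fromBlocks_multiply]
      simp [hB', hC', Matrix.mul_assoc]
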